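/- Let S = ⟨n₁,…,n_t⟩ be a numerical monoid with atoms 1 < n₁ < … < n_t. Then { k ∈ ℕ : λ_k(S)/k = 1/ρ(S) } ∪ {0} = (lcm(n₁,n_t)/n₁)·ℕ₀, where ρ(S) = n_t/n₁. -/
import Mathlib


open scoped BigOperators

/-- `V_k(S)` for the numerical monoid generated by `n : Fin t → ℕ`. -/
def numUnionLengths {t : ℕ} (n : Fin t → ℕ) (k : ℕ) : Set ℕ :=
  {m | ∃ x y : Fin t → ℕ, (∑ i, x i) = k ∧ (∑ i, y i) = m ∧
    (∑ i, x i * n i) = ∑ i, y i * n i}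

/-- for a numerical monoid `S = ⟨n₁,…,n_t⟩` with `1 < n₁ < … < n_t`,
`{k : λ_k(S)/k = 1/ρ(S) = n₁/n_t} ∪ {0} = (lcm(n₁,n_t)/n₁)·ℕ₀`, where
`λ_k(S) = min V_k(S)`; the condition `λ_k(S)/k = n₁/n_t` reads: `V_k(S)` has a least
element `m` with `m·n_t = k·n₁`. -/
theorem numerical_lambda_set_eq_multiples {t : ℕ} (ht : 0 < t) (n : Fin t → ℕ)
    (hmono : StrictMono n) (h1 : 1 < n ⟨0, ht⟩)
    (hgcd : Finset.univ.gcd n = 1)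
    (hatom : ∀ i, ¬ (n i ∈ AddSubmonoid.closure (Set.range n \ {n i}))) :
    ({k : ℕ | 0 < k ∧ ∃ m, IsLeast (numUnionLengths n k) m ∧
        m * n ⟨t - 1, by omega⟩ = k * n ⟨0, ht⟩} ∪ {0}) =
      {k : ℕ | (Nat.lcm (n ⟨0, ht⟩) (n ⟨t - 1, by omega⟩) / n ⟨0, ht⟩) ∣ k} := by
  set i0 : Fin t := ⟨0, ht⟩ with hi0
  set i1 : Fin t := ⟨t - 1, by omega⟩ with hi1
  set a := n i0 with hadef
  set b := n i1 with hbdef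
  have hab : a ≤ b := hmono.monotone (by simp [hi0, hi1, Fin.le_def])
  have ha : 0 < a := by omega
  have hb : 0 < b := lt_of_lt_of_le ha hab
  have hna : ∀ i : Fin t, a ≤ n i := fun i =>
    hmono.monotone (by simp [hi0, Fin.le_def])
  have hnb : ∀ i : Fin t, n i ≤ b := fun i =>
    hmono.monotone (by simp [hi1, Fin.le_def]; omega)
  -- divisibility equivalence
  have hal : a * (Nat.lcm a b / a) = Nat.lcm a b := Nat.mul_div_cancel' (Nat.dvd_lcm_left a b)
  have hbd : ∀ k : ℕ, b ∣ k * a ↔ (Nat.lcm a b / a) ∣ k := by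
    intro k
    constructor
    · intro h
      have h2 : Nat.lcm a b ∣ a * k :=
        Nat.lcm_dvd ⟨k, rfl⟩ (by rwa [mul_comm] at h)
      rw [← hal] at h2
      exact (mul_dvd_mul_iff_left (by omega : a ≠ 0)).mp h2
    · intro h
      have h2 : a * (Nat.lcm a b / a) ∣ a * k := mul_dvd_mul_left a h
      rw [hal] at h2
      exact dvd_trans (Nat.dvd_lcm_right a b) (by rwa [mul_comm] at h2)
  -- bounds on sums
  have hlow : ∀ x : Fin t → ℕ, (∑ i, x i) * a ≤ ∑ i, x i * n i := by
    intro x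
    rw [Finset.sum_mul]
    exact Finset.sum_le_sum fun i _ => Nat.mul_le_mul_left _ (hna i)
  have hhigh : ∀ y : Fin t → ℕ, (∑ i, y i * n i) ≤ (∑ i, y i) * b := by
    intro y
    rw [Finset.sum_mul]
    exact Finset.sum_le_sum fun i _ => Nat.mul_le_mul_left _ (hnb i)
  ext k
  simp only [Set.mem_union, Set.mem_setOf_eq, Set.mem_singleton_iff]
  constructor
  · rintro (⟨hk, m, hleast, hmb⟩ | rfl)
    · refine (hbd k).mp ⟨m, ?_⟩
      have hmb' : m * b = k * a := hmb
      rw [mul_comm b m]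
      exact hmb'.symm
    · exact dvd_zero _
  · intro hdvd
    rcases Nat.eq_zero_or_pos k with rfl | hk
    · exact Or.inr rfl
    refine Or.inl ⟨hk, k * a / b, ⟨?_, ?_⟩, Nat.div_mul_cancel ((hbd k).mpr hdvd)⟩
    · -- membership
      have hm : (k * a / b) * b = k * a := Nat.div_mul_cancel ((hbd k).mpr hdvd)
      refine ⟨fun i => if i = i0 then k else 0, fun i => if i = i1 then k * a / b else 0,
        ?_, ?_, ?_⟩
      · simp [Finset.sum_ite_eq']
      · simp [Finset.sum_ite_eq']
      · have : ∀ i, (if i = i0 then k else 0) * n i = if i = i0 then k * a else 0 := by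
          intro i; split <;> simp_all
        have h2 : ∀ i, (if i = i1 then k * a / b else 0) * n i =
            if i = i1 then (k * a / b) * b else 0 := by
          intro i; split <;> simp_all
        simp only [this, h2, Finset.sum_ite_eq', Finset.mem_univ, if_true, hm]
    · -- lower bound
      rintro m' ⟨x, y, hx, hy, hxy⟩
      have h3 : k * a ≤ m' * b := by
        calc k * a = (∑ i, x i) * a := by rw [hx]
          _ ≤ ∑ i, x i * n i := hlow x
          _ = ∑ i, y i * n i := hxy
          _ ≤ (∑ i, y i) * b := hhigh y
          _ = m' * b := by rw [hy]
      have hm : (k * a / b) * b = k * a := Nat.div_mul_cancel ((hbd k).mpr hdvd)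
      exact Nat.le_of_mul_le_mul_right (by omega) hb
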